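/- Let a and b be positive integers with gcd(a,b) = 1. Then the Sylvester sum satisfies s(a,b) = (1/12)(a − 1)(b − 1)(2ab − a − b − 1). -/
import Mathlib

open Finset

private lemma syl_key_inj (a b : ℕ) (hgcd : Nat.gcd a b = 1) {y₁ y₂ : ℕ}
    (hy₁ : y₁ ∈ Finset.Ico 1 a) (hy₂ : y₂ ∈ Finset.Ico 1 a)
    (h2 : b * y₁ ≡ b * y₂ [MOD a]) : y₁ = y₂ := by
  have h3 := Nat.ModEq.cancel_left_of_coprime hgcd h2
  simp only [Finset.mem_Ico] at hy₁ hy₂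
  have e1 : y₁ % a = y₂ % a := h3
  rw [Nat.mod_eq_of_lt hy₁.2, Nat.mod_eq_of_lt hy₂.2] at e1
  exact e1

private lemma syl_not_dvd (a b : ℕ) (hgcd : Nat.gcd a b = 1) {y : ℕ}
    (hy : y ∈ Finset.Ico 1 a) : ¬ a ∣ b * y := by
  simp only [Finset.mem_Ico] at hy
  intro hdvd
  have h1 : a ∣ y := Nat.Coprime.dvd_of_dvd_mul_left hgcd hdvd
  have := Nat.le_of_dvd (by omega) h1
  omega

private lemma syl_perm_sum (a b : ℕ) (hgcd : Nat.gcd a b = 1) (g : ℕ → ℚ) :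
    ∑ y ∈ Finset.Ico 1 a, g (b * y % a) = ∑ y ∈ Finset.Ico 1 a, g y := by
  rcases Nat.eq_zero_or_pos a with rfl | ha
  · simp
  have hinj : ∀ y₁ ∈ Finset.Ico 1 a, ∀ y₂ ∈ Finset.Ico 1 a,
      b * y₁ % a = b * y₂ % a → y₁ = y₂ := by
    intro y₁ h₁ y₂ h₂ he
    exact syl_key_inj a b hgcd h₁ h₂ he
  have himg : (Finset.Ico 1 a).image (fun y => b * y % a) = Finset.Ico 1 a := by
    apply Finset.eq_of_subset_of_card_le
    · intro t ht
      simp only [Finset.mem_image] at ht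
      obtain ⟨y, hy, rfl⟩ := ht
      have h1 : b * y % a < a := Nat.mod_lt _ ha
      have h2 : b * y % a ≠ 0 := by
        intro h0
        exact syl_not_dvd a b hgcd hy (Nat.dvd_of_mod_eq_zero h0)
      simp only [Finset.mem_Ico]; omega
    · rw [Finset.card_image_of_injOn (fun x hx y hy h => hinj x hx y hy h)]
  conv_rhs => rw [← himg]
  rw [Finset.sum_image hinj]

private lemma syl_sq_sum (n : ℕ) :
    ∑ y ∈ Finset.range n, (y : ℚ) ^ 2 = n * (n - 1) * (2 * n - 1) / 6 := by
  induction n with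
  | zero => simp
  | succ n ih => rw [Finset.sum_range_succ, ih]; push_cast; ring

private lemma syl_lin_sum (n : ℕ) :
    ∑ y ∈ Finset.range n, (y : ℚ) = n * (n - 1) / 2 := by
  induction n with
  | zero => simp
  | succ n ih => rw [Finset.sum_range_succ, ih]; push_cast; ring

private lemma syl_ext (a : ℕ) (g : ℕ → ℚ) (hg : g 0 = 0) :
    ∑ y ∈ Finset.Ico 1 a, g y = ∑ y ∈ Finset.range a, g y := by
  rcases Nat.eq_zero_or_pos a with rfl | ha
  · simp
  rw [Finset.range_eq_Ico, Finset.sum_eq_sum_Ico_succ_bot ha, hg, zero_add]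

private lemma syl_Icc_sum (q : ℕ) :
    ∑ k ∈ Finset.Icc 1 q, (k : ℚ) = q * (q + 1) / 2 := by
  induction q with
  | zero => simp
  | succ q ih =>
      rw [Finset.sum_Icc_succ_top (by omega : 1 ≤ q + 1), ih]
      push_cast; ring

private lemma syl_term (A q r n : ℚ) (hA : A ≠ 0) (h : A * q + r = n) :
    q * n - A * (q * (q + 1)) / 2 = (n ^ 2 - r ^ 2) / (2 * A) - (n - r) / 2 := by
  subst h; field_simp; ring

/-- Sylvester's sum formula
`s(a,b) = (1/12)(a-1)(b-1)(2ab - a - b - 1)` for coprime positive `a, b`. -/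
theorem sylvester_sum_two_variables
    (a b : ℕ) (ha : 0 < a) (hb : 0 < b) (hgcd : Nat.gcd a b = 1) :
    ∑ᶠ n ∈ {n : ℕ | 0 < n ∧ ¬∃ x y : ℕ, n = a * x + b * y}, (n : ℚ) =
      (1 / 12) * ((a : ℚ) - 1) * ((b : ℚ) - 1) *
        (2 * (a : ℚ) * (b : ℚ) - (a : ℚ) - (b : ℚ) - 1) := by
  have haQ : (a : ℚ) ≠ 0 := Nat.cast_ne_zero.mpr (by omega)
  set T : Finset ℕ := (Finset.Ico 1 a).biUnion
      (fun y => (Finset.Icc 1 (b * y / a)).image (fun k => b * y - a * k)) with hT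
  have hfacts : ∀ y ∈ Finset.Ico 1 a, ∀ k ∈ Finset.Icc 1 (b * y / a),
      a * k < b * y := by
    intro y hy k hk
    simp only [Finset.mem_Icc] at hk
    have h1 : a * k ≤ a * (b * y / a) := Nat.mul_le_mul_left a hk.2
    have h2 : a * (b * y / a) ≤ b * y := Nat.mul_div_le _ _
    have h3 : a * (b * y / a) ≠ b * y := by
      intro h
      exact syl_not_dvd a b hgcd hy ⟨_, h.symm⟩
    omega
  -- set equality
  have hset : {n : ℕ | 0 < n ∧ ¬∃ x y : ℕ, n = a * x + b * y} = ↑T := by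
    ext n
    simp only [Set.mem_setOf_eq, Finset.mem_coe, hT, Finset.mem_biUnion,
      Finset.mem_image]
    constructor
    · rintro ⟨hn, hrep⟩
      obtain ⟨c, hc⟩ : ∃ c, b * c ≡ 1 [MOD a] := by
        have ht := Nat.ModEq.pow_totient (Nat.Coprime.symm hgcd)
        refine ⟨b ^ (Nat.totient a - 1), ?_⟩
        have hφ : 0 < Nat.totient a := Nat.totient_pos.mpr ha
        calc b * b ^ (Nat.totient a - 1) = b ^ (Nat.totient a) := by
              rw [mul_comm, ← pow_succ]; congr 1; omega
          _ ≡ 1 [MOD a] := ht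
      set y := c * n % a with hy
      have hmod : b * y ≡ n [MOD a] := by
        calc b * y ≡ b * (c * n) [MOD a] :=
              Nat.ModEq.mul_left b (Nat.mod_modEq (c * n) a)
          _ = b * c * n := by ring
          _ ≡ 1 * n [MOD a] := Nat.ModEq.mul_right n hc
          _ = n := by ring
      have hylt : y < a := Nat.mod_lt _ ha
      have hy0 : y ≠ 0 := by
        intro h0
        rw [h0, mul_zero] at hmod
        obtain ⟨m, rfl⟩ := (Nat.modEq_zero_iff_dvd).mp hmod.symm
        exact hrep ⟨m, 0, by ring⟩
      have hnlt : n < b * y := by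
        by_contra hge
        push_neg at hge
        obtain ⟨m, hm⟩ := (Nat.modEq_iff_dvd' hge).mp hmod
        exact hrep ⟨m, y, by omega⟩
      obtain ⟨k, hk⟩ := (Nat.modEq_iff_dvd' hnlt.le).mp hmod.symm
      have hk1 : 1 ≤ k := by
        rcases Nat.eq_zero_or_pos k with rfl | h
        · simp at hk; omega
        · exact h
      have hk2 : k ≤ b * y / a := (Nat.le_div_iff_mul_le ha).mpr
        (by rw [mul_comm]; omega)
      exact ⟨y, Finset.mem_Ico.mpr ⟨by omega, hylt⟩, k,
        Finset.mem_Icc.mpr ⟨hk1, hk2⟩, by omega⟩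
    · rintro ⟨y, hy, k, hk, rfl⟩
      have hlt := hfacts y hy k hk
      refine ⟨by omega, ?_⟩
      rintro ⟨x, z, hxz⟩
      simp only [Finset.mem_Ico] at hy
      have hk' := Finset.mem_Icc.mp hk
      have hak : 0 < a * k := Nat.mul_pos ha (by omega)
      have hz : z < y := by
        by_contra hge
        push_neg at hge
        have : b * y ≤ b * z := Nat.mul_le_mul_left b hge
        omega
      have key : b * y = a * x + b * z + a * k := by omega
      have keyz : (b : ℤ) * y = a * x + b * z + a * k := by exact_mod_cast key
      have hint : (a : ℤ) ∣ (b : ℤ) * ((y : ℤ) - z) :=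
        ⟨(x : ℤ) + k, by linear_combination keyz⟩
      have hcop : IsCoprime (a : ℤ) (b : ℤ) := by
        rw [Int.isCoprime_iff_gcd_eq_one]; simpa using hgcd
      have hdy : (a : ℤ) ∣ ((y : ℤ) - z) := hcop.dvd_of_dvd_mul_left hint
      have : (a : ℤ) ≤ (y : ℤ) - z := Int.le_of_dvd (by omega) hdy
      omega
  rw [hset, finsum_mem_coe_finset]
  -- disjointness of the classes
  have hdisj : ∀ y₁ ∈ (Finset.Ico 1 a : Finset ℕ), ∀ y₂ ∈ Finset.Ico 1 a, y₁ ≠ y₂ →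
      Disjoint ((Finset.Icc 1 (b * y₁ / a)).image (fun k => b * y₁ - a * k))
        ((Finset.Icc 1 (b * y₂ / a)).image (fun k => b * y₂ - a * k)) := by
    intro y₁ h₁ y₂ h₂ hne
    rw [Finset.disjoint_left]
    rintro n hn₁ hn₂
    simp only [Finset.mem_image] at hn₁ hn₂
    obtain ⟨k₁, hk₁, he₁⟩ := hn₁
    obtain ⟨k₂, hk₂, he₂⟩ := hn₂
    have hl₁ := hfacts y₁ h₁ k₁ hk₁
    have hl₂ := hfacts y₂ h₂ k₂ hk₂
    have heq : b * y₁ + a * k₂ = b * y₂ + a * k₁ := by omega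
    have hmeq : b * y₁ ≡ b * y₂ [MOD a] := by
      have h1 : b * y₁ ≡ b * y₁ + a * k₂ [MOD a] :=
        (Nat.modEq_iff_dvd' (by omega)).mpr ⟨k₂, by omega⟩
      have h2 : b * y₂ ≡ b * y₂ + a * k₁ [MOD a] :=
        (Nat.modEq_iff_dvd' (by omega)).mpr ⟨k₁, by omega⟩
      exact h1.trans (heq ▸ h2.symm)
    exact hne (syl_key_inj a b hgcd h₁ h₂ hmeq)
  rw [hT, Finset.sum_biUnion hdisj]
  -- evaluate the inner sums
  have hstep : ∀ y ∈ Finset.Ico 1 a,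
      (∑ n ∈ (Finset.Icc 1 (b * y / a)).image (fun k => b * y - a * k), (n : ℚ))
        = (((b : ℚ) * y) ^ 2 - ((b * y % a : ℕ) : ℚ) ^ 2) / (2 * a)
          - ((b : ℚ) * y - ((b * y % a : ℕ) : ℚ)) / 2 := by
    intro y hy
    have hinj : ∀ k₁ ∈ Finset.Icc 1 (b * y / a), ∀ k₂ ∈ Finset.Icc 1 (b * y / a),
        b * y - a * k₁ = b * y - a * k₂ → k₁ = k₂ := by
      intro k₁ h₁ k₂ h₂ he
      have := hfacts y hy k₁ h₁
      have := hfacts y hy k₂ h₂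
      have h4 : a * k₁ = a * k₂ := by omega
      exact Nat.eq_of_mul_eq_mul_left ha h4
    rw [Finset.sum_image hinj]
    have hcast : ∀ k ∈ Finset.Icc 1 (b * y / a),
        ((b * y - a * k : ℕ) : ℚ) = (b : ℚ) * y - a * k := by
      intro k hk
      have := hfacts y hy k hk
      push_cast [Nat.cast_sub this.le]
      ring
    rw [Finset.sum_congr rfl hcast]
    have hdm : (a : ℚ) * (b * y / a : ℕ) + ((b * y % a : ℕ) : ℚ) = (b : ℚ) * y := by
      exact_mod_cast congrArg (Nat.cast : ℕ → ℚ) (Nat.div_add_mod (b * y) a)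
    have hsum : ∑ k ∈ Finset.Icc 1 (b * y / a), ((b : ℚ) * y - a * k)
        = ((b * y / a : ℕ) : ℚ) * ((b : ℚ) * y)
          - (a : ℚ) * (((b * y / a : ℕ) : ℚ) * (((b * y / a : ℕ) : ℚ) + 1)) / 2 := by
      rw [Finset.sum_sub_distrib, Finset.sum_const, ← Finset.mul_sum, syl_Icc_sum]
      rw [Nat.card_Icc]
      push_cast
      ring
    rw [hsum]
    exact syl_term (a : ℚ) _ _ _ haQ hdm
  rw [Finset.sum_congr rfl hstep]
  -- split the sums and use the permutation property
  have hperm2 := syl_perm_sum a b hgcd (fun t => (t : ℚ) ^ 2)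
  have hperm1 := syl_perm_sum a b hgcd (fun t => (t : ℚ))
  have hS2 : ∑ y ∈ Finset.Ico 1 a, (y : ℚ) ^ 2
      = (a : ℚ) * (a - 1) * (2 * a - 1) / 6 := by
    rw [syl_ext a _ (by norm_num), syl_sq_sum]
  have hS1 : ∑ y ∈ Finset.Ico 1 a, (y : ℚ) = (a : ℚ) * (a - 1) / 2 := by
    rw [syl_ext a _ (by norm_num), syl_lin_sum]
  have expand : ∀ y ∈ Finset.Ico 1 a,
      (((b : ℚ) * y) ^ 2 - ((b * y % a : ℕ) : ℚ) ^ 2) / (2 * a)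
          - ((b : ℚ) * y - ((b * y % a : ℕ) : ℚ)) / 2
      = (1 / (2 * a)) * ((b : ℚ) ^ 2 * (y : ℚ) ^ 2)
        - (1 / (2 * a)) * ((b * y % a : ℕ) : ℚ) ^ 2
        - ((1 / 2) * ((b : ℚ) * y) - (1 / 2) * ((b * y % a : ℕ) : ℚ)) := by
    intro y _
    field_simp
  rw [Finset.sum_congr rfl expand]
  simp only [Finset.sum_sub_distrib, ← Finset.mul_sum]
  rw [hperm1, hperm2, hS2, hS1]
  field_simp
  ring
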